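/- Let α ∈ (0,1) and f ∈ L_q((0,T), t^μ dt) with q ∈ (1,∞), μ ∈ (−1,q−1). If u = I^α f, then ‖t^{−α} u‖_{L_q((0,T), t^μ dt)} ≤ N(α,q,μ) ‖f‖_{L_q((0,T), t^μ dt)}. -/

import Mathlib

/-!
Substituting `s = tσ` gives `t^{-α} |I^α f(t)| ≤ Γ(α)⁻¹ ∫₀¹ (1-σ)^{α-1} |f(tσ)| dσ`, an average of
dilates of `|f|`. On `L_q((0,T), t^μ dt)` the dilation `f ↦ f(·σ)`, `σ ∈ (0,1)`, has norm at most
`σ^{-(μ+1)/q}`, so by Minkowski's integral inequality the constant is `Γ(α)⁻¹ B(1 - (μ+1)/q, α)`,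
a Beta integral which converges exactly because `μ < q - 1`. Minkowski's inequality is obtained
as Hölder's inequality in `σ` with the weight `σ^{-(μ+1)/q}`, followed by Tonelli.
-/

open MeasureTheory Set
open scoped ENNReal

theorem setLIntegral_Ioo_comp_mul_left {c : ℝ} (hc : 0 < c) (g : ℝ → ℝ≥0∞) (b : ℝ) :
    ENNReal.ofReal c * ∫⁻ y in Ioo 0 b, g (c * y) = ∫⁻ x in Ioo 0 (c * b), g x := by
  have hpre : (c * ·) ⁻¹' Ioo 0 (c * b) = Ioo 0 b := by
    ext y
    simp only [mem_preimage, mem_Ioo, mul_pos_iff_of_pos_left hc, mul_lt_mul_iff_right₀ hc]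
  have hmap : ENNReal.ofReal c • Measure.map (c * ·) volume = (volume : Measure ℝ) := by
    simpa only [abs_of_pos hc] using Real.smul_map_volume_mul_left hc.ne'
  have hemb : MeasurableEmbedding (c * · : ℝ → ℝ) := measurableEmbedding_mulLeft₀ hc.ne'
  conv_rhs => rw [← hmap, Measure.restrict_smul, lintegral_smul_measure, smul_eq_mul,
    hemb.restrict_map, hpre, hemb.lintegral_map]

theorem lintegral_Ioo_rpow_mul_one_sub_rpow_lt_top {a b : ℝ} (ha : -1 < a) (hb : -1 < b) :
    ∫⁻ σ in Ioo (0:ℝ) 1, ENNReal.ofReal (σ ^ a * (1 - σ) ^ b) < ∞ := by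
  have hbeta := Complex.betaIntegral_convergent (u := (a + 1 : ℝ)) (v := (b + 1 : ℝ))
    (by rw [Complex.ofReal_re]; linarith) (by rw [Complex.ofReal_re]; linarith)
  rw [intervalIntegrable_iff_integrableOn_Ioo_of_le zero_le_one] at hbeta
  refine IntegrableOn.setLIntegral_lt_top
    (IntegrableOn.congr_fun hbeta.norm (fun σ hσ => ?_) measurableSet_Ioo)
  have h1σ : 0 ≤ 1 - σ := by linarith [hσ.2]
  simp only [Complex.ofReal_add, Complex.ofReal_one, add_sub_cancel_right]
  rw [← Complex.ofReal_cpow hσ.1.le, ← Complex.ofReal_one, ← Complex.ofReal_sub,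
    ← Complex.ofReal_cpow h1σ, ← Complex.ofReal_mul, Complex.norm_real, Real.norm_of_nonneg]
  exact mul_nonneg (Real.rpow_nonneg hσ.1.le _) (Real.rpow_nonneg h1σ _)

theorem lintegral_mul_rpow_le_weighted {X : Type*} [MeasurableSpace X] {ν : Measure X} {q : ℝ}
    (hq : 1 < q) {k w g : X → ℝ≥0∞} (hk : AEMeasurable k ν) (hw : AEMeasurable w ν)
    (hg : AEMeasurable g ν) (hw0 : ∀ᵐ x ∂ν, w x ≠ 0) (hwtop : ∀ᵐ x ∂ν, w x ≠ ∞) :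
    (∫⁻ x, k x * g x ∂ν) ^ q ≤
      (∫⁻ x, k x * w x ∂ν) ^ (q - 1) * ∫⁻ x, k x * w x ^ (1 - q) * g x ^ q ∂ν := by
  set p := q.conjExponent
  have hpq : p.HolderConjugate q := (Real.HolderConjugate.conjExponent hq).symm
  have hq0 : 0 < q := hpq.symm.pos
  have hp0 : 0 < p := hpq.pos
  have hsum : 1 / p + 1 / q = 1 := by rw [one_div, one_div, hpq.inv_add_inv_eq_one]
  have hpq' : 1 / p * q = q - 1 := by
    rw [eq_sub_of_add_eq hsum]; field_simp
  set φ : X → ℝ≥0∞ := fun x => (k x * w x) ^ (1 / p)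
  set ψ : X → ℝ≥0∞ := fun x => k x ^ (1 / q) * w x ^ (-(1 / p)) * g x
  have hsplit : ∫⁻ x, k x * g x ∂ν = ∫⁻ x, (φ * ψ) x ∂ν := by
    refine lintegral_congr_ae ?_
    filter_upwards [hw0, hwtop] with x hx0 hxtop
    simp only [φ, ψ, Pi.mul_apply]
    rw [ENNReal.mul_rpow_of_nonneg _ _ (by positivity)]
    calc k x * g x
        = k x ^ (1 / p + 1 / q) * (w x ^ (1 / p + -(1 / p))) * g x := by
          rw [hsum, add_neg_cancel, ENNReal.rpow_one, ENNReal.rpow_zero, mul_one]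
      _ = _ := by
          rw [ENNReal.rpow_add_of_nonneg _ _ (by positivity) (by positivity),
            ENNReal.rpow_add _ _ hx0 hxtop]
          ring
  have hφ : ∫⁻ x, φ x ^ p ∂ν = ∫⁻ x, k x * w x ∂ν := by
    simp only [φ, ← ENNReal.rpow_mul, one_div_mul_cancel hp0.ne', ENNReal.rpow_one]
  have hψ : ∫⁻ x, ψ x ^ q ∂ν = ∫⁻ x, k x * w x ^ (1 - q) * g x ^ q ∂ν := by
    refine lintegral_congr fun x => ?_
    simp only [ψ, ENNReal.mul_rpow_of_nonneg _ _ hq0.le, ← ENNReal.rpow_mul,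
      one_div_mul_cancel hq0.ne', ENNReal.rpow_one, neg_mul, hpq', neg_sub]
  calc (∫⁻ x, k x * g x ∂ν) ^ q
      ≤ ((∫⁻ x, φ x ^ p ∂ν) ^ (1 / p) * (∫⁻ x, ψ x ^ q ∂ν) ^ (1 / q)) ^ q := by
        rw [hsplit]
        exact ENNReal.rpow_le_rpow
          (ENNReal.lintegral_mul_le_Lp_mul_Lq ν hpq (by fun_prop) (by fun_prop)) hq0.le
    _ = _ := by
        rw [hφ, hψ, ENNReal.mul_rpow_of_nonneg _ _ hq0.le, ← ENNReal.rpow_mul, ← ENNReal.rpow_mul,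
          hpq', one_div_mul_cancel hq0.ne', ENNReal.rpow_one]

theorem setLIntegral_Ioo_comp_mul_right_mul_rpow_le (G : ℝ → ℝ≥0∞) (μ T : ℝ) {σ : ℝ}
    (hσ0 : 0 < σ) (hσ1 : σ ≤ 1) :
    ∫⁻ t in Ioo 0 T, G (t * σ) * ENNReal.ofReal (t ^ μ) ≤
      ENNReal.ofReal (σ ^ (-μ - 1)) * ∫⁻ t in Ioo 0 T, G t * ENNReal.ofReal (t ^ μ) := by
  set g : ℝ → ℝ≥0∞ := fun x => G x * ENNReal.ofReal (x ^ μ)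
  have hcomp : ∀ t ∈ Ioo 0 T,
      G (t * σ) * ENNReal.ofReal (t ^ μ) = ENNReal.ofReal (σ ^ (-μ)) * g (σ * t) := by
    intro t ht
    rw [mul_left_comm, ← ENNReal.ofReal_mul (by positivity), Real.mul_rpow hσ0.le ht.1.le,
      ← mul_assoc, ← Real.rpow_add hσ0, neg_add_cancel, Real.rpow_zero, one_mul, mul_comm σ t]
  have hsub : Ioo 0 (σ * T) ⊆ Ioo 0 T := fun x hx => ⟨hx.1, by nlinarith [hx.1, hx.2]⟩
  calc ∫⁻ t in Ioo 0 T, G (t * σ) * ENNReal.ofReal (t ^ μ)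
      = ENNReal.ofReal (σ ^ (-μ)) * ∫⁻ t in Ioo 0 T, g (σ * t) := by
        rw [setLIntegral_congr_fun measurableSet_Ioo hcomp,
          lintegral_const_mul' _ _ ENNReal.ofReal_ne_top]
    _ = ENNReal.ofReal (σ ^ (-μ - 1)) * ∫⁻ x in Ioo 0 (σ * T), g x := by
        rw [← setLIntegral_Ioo_comp_mul_left hσ0, ← mul_assoc, ← ENNReal.ofReal_mul (by positivity),
          ← Real.rpow_add_one hσ0.ne', sub_add_cancel]
    _ ≤ ENNReal.ofReal (σ ^ (-μ - 1)) * ∫⁻ t in Ioo 0 T, g t :=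
        mul_le_mul_right (lintegral_mono_set hsub) _

theorem setLIntegral_Ioo_lintegral_dilation_rpow_le {k F : ℝ → ℝ≥0∞} (hk : Measurable k)
    (hF : Measurable F) {q : ℝ} (hq : 1 < q) (μ T : ℝ) :
    ∫⁻ t in Ioo 0 T, (∫⁻ σ in Ioo 0 1, k σ * F (t * σ)) ^ q * ENNReal.ofReal (t ^ μ) ≤
      (∫⁻ σ in Ioo 0 1, k σ * ENNReal.ofReal (σ ^ (-(μ + 1) / q))) ^ q *
        ∫⁻ t in Ioo 0 T, F t ^ q * ENNReal.ofReal (t ^ μ) := by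
  set w : ℝ → ℝ≥0∞ := fun σ => ENNReal.ofReal (σ ^ (-(μ + 1) / q))
  set B := ∫⁻ σ in Ioo 0 1, k σ * w σ
  set I := ∫⁻ t in Ioo 0 T, F t ^ q * ENNReal.ofReal (t ^ μ)
  set h : ℝ → ℝ≥0∞ := fun σ => k σ * w σ ^ (1 - q)
  -- `w` is chosen so that Hölder's inequality followed by the dilation bound gives back `B`
  have hweight : ∀ σ ∈ Ioo (0:ℝ) 1, h σ * (ENNReal.ofReal (σ ^ (-μ - 1)) * I) = k σ * w σ * I := by
    intro σ hσ
    have hw : 0 < σ ^ (-(μ + 1) / q) := Real.rpow_pos_of_pos hσ.1 _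
    simp only [h, w]
    rw [← mul_assoc, mul_assoc (k σ), ENNReal.ofReal_rpow_of_pos hw,
      ← ENNReal.ofReal_mul (Real.rpow_pos_of_pos hw _).le, ← Real.rpow_mul hσ.1.le,
      ← Real.rpow_add hσ.1]
    congr 4
    field_simp
    ring
  have hholder : ∀ t, (∫⁻ σ in Ioo 0 1, k σ * F (t * σ)) ^ q ≤
      B ^ (q - 1) * ∫⁻ σ in Ioo 0 1, h σ * F (t * σ) ^ q := by
    intro t
    refine lintegral_mul_rpow_le_weighted hq hk.aemeasurable (by fun_prop) (by fun_prop) ?_ ?_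
    · filter_upwards [ae_restrict_mem measurableSet_Ioo] with σ hσ
      exact (ENNReal.ofReal_pos.2 (Real.rpow_pos_of_pos hσ.1 _)).ne'
    · exact ae_of_all _ fun σ => ENNReal.ofReal_ne_top
  calc ∫⁻ t in Ioo 0 T, (∫⁻ σ in Ioo 0 1, k σ * F (t * σ)) ^ q * ENNReal.ofReal (t ^ μ)
      ≤ ∫⁻ t in Ioo 0 T, B ^ (q - 1) *
          ((∫⁻ σ in Ioo 0 1, h σ * F (t * σ) ^ q) * ENNReal.ofReal (t ^ μ)) := by
        simp_rw [← mul_assoc]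
        exact lintegral_mono fun t => mul_le_mul_left (hholder t) _
    _ = B ^ (q - 1) * ∫⁻ σ in Ioo 0 1, h σ *
          ∫⁻ t in Ioo 0 T, F (t * σ) ^ q * ENNReal.ofReal (t ^ μ) := by
        rw [lintegral_const_mul _ (by fun_prop)]
        congr 1
        simp_rw [← lintegral_mul_const' _ _ ENNReal.ofReal_ne_top, mul_assoc]
        rw [lintegral_lintegral_swap (by fun_prop)]
        exact lintegral_congr fun σ => lintegral_const_mul _ (by fun_prop)
    _ ≤ B ^ (q - 1) * ∫⁻ σ in Ioo 0 1, h σ * (ENNReal.ofReal (σ ^ (-μ - 1)) * I) := by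
        refine mul_le_mul_right (setLIntegral_mono' measurableSet_Ioo fun σ hσ => ?_) _
        exact mul_le_mul_right
          (setLIntegral_Ioo_comp_mul_right_mul_rpow_le _ μ T hσ.1 hσ.2.le) _
    _ = B ^ q * I := by
        rw [setLIntegral_congr_fun measurableSet_Ioo hweight, lintegral_mul_const _ (by fun_prop),
          ← mul_assoc]
        congr 1
        conv_rhs => rw [← sub_add_cancel q 1,
          ENNReal.rpow_add_of_nonneg _ _ (by linarith) zero_le_one, ENNReal.rpow_one]

theorem ofReal_abs_rpow_mul_eq_enorm_rpow_mul (x y : ℝ) {q : ℝ} (hq : 0 ≤ q) :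
    ENNReal.ofReal (|x| ^ q * y) = ‖x‖ₑ ^ q * ENNReal.ofReal y := by
  rw [ENNReal.ofReal_mul (by positivity), ← ENNReal.ofReal_rpow_of_nonneg (abs_nonneg x) hq,
    Real.enorm_eq_ofReal_abs]

noncomputable def riemannLiouville (α : ℝ) (f : ℝ → ℝ) (t : ℝ) : ℝ :=
  (Real.Gamma α)⁻¹ * ∫ s in Ioo 0 t, (t - s) ^ (α - 1) * f s

theorem enorm_rpow_neg_mul_riemannLiouville_le (α : ℝ) (f : ℝ → ℝ) {t : ℝ} (ht : 0 < t) :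
    ‖t ^ (-α) * riemannLiouville α f t‖ₑ ≤
      ‖(Real.Gamma α)⁻¹‖ₑ * ∫⁻ σ in Ioo 0 1, ENNReal.ofReal ((1 - σ) ^ (α - 1)) * ‖f (t * σ)‖ₑ := by
  have hkernel : ∀ σ ∈ Ioo (0:ℝ) 1,
      ENNReal.ofReal (t ^ (-α + 1)) * ‖(t - t * σ) ^ (α - 1) * f (t * σ)‖ₑ =
        ENNReal.ofReal ((1 - σ) ^ (α - 1)) * ‖f (t * σ)‖ₑ := by
    intro σ hσ
    have h1σ : 0 ≤ 1 - σ := by linarith [hσ.2]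
    rw [enorm_mul, ← mul_assoc, show t - t * σ = t * (1 - σ) by ring,
      Real.mul_rpow ht.le h1σ, Real.enorm_of_nonneg (by positivity),
      ← ENNReal.ofReal_mul (by positivity), ← mul_assoc, ← Real.rpow_add ht]
    norm_num
  have hscale := setLIntegral_Ioo_comp_mul_left ht (fun s => ‖(t - s) ^ (α - 1) * f s‖ₑ) 1
  rw [mul_one] at hscale
  calc ‖t ^ (-α) * riemannLiouville α f t‖ₑ
      = ‖(Real.Gamma α)⁻¹‖ₑ *
          (ENNReal.ofReal (t ^ (-α)) * ‖∫ s in Ioo 0 t, (t - s) ^ (α - 1) * f s‖ₑ) := by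
        rw [riemannLiouville, enorm_mul, enorm_mul, Real.enorm_of_nonneg (by positivity),
          mul_left_comm]
    _ ≤ ‖(Real.Gamma α)⁻¹‖ₑ *
          (ENNReal.ofReal (t ^ (-α)) * ∫⁻ s in Ioo 0 t, ‖(t - s) ^ (α - 1) * f s‖ₑ) := by
        gcongr
        exact enorm_integral_le_lintegral_enorm _
    _ = _ := by
        rw [← hscale, ← mul_assoc (ENNReal.ofReal _),
          ← ENNReal.ofReal_mul (by positivity), ← Real.rpow_add_one ht.ne',
          ← lintegral_const_mul' _ _ ENNReal.ofReal_ne_top,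
          setLIntegral_congr_fun measurableSet_Ioo hkernel]

theorem setLIntegral_Ioo_enorm_rpow_neg_mul_riemannLiouville_le (α μ T : ℝ) {q : ℝ} (hq : 1 < q)
    {f : ℝ → ℝ} (hf : Measurable f) :
    ∫⁻ t in Ioo 0 T, ‖t ^ (-α) * riemannLiouville α f t‖ₑ ^ q * ENNReal.ofReal (t ^ μ) ≤
      (‖(Real.Gamma α)⁻¹‖ₑ * ∫⁻ σ in Ioo 0 1,
          ENNReal.ofReal ((1 - σ) ^ (α - 1)) * ENNReal.ofReal (σ ^ (-(μ + 1) / q))) ^ q *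
        ∫⁻ t in Ioo 0 T, ‖f t‖ₑ ^ q * ENNReal.ofReal (t ^ μ) := by
  have hq0 : 0 ≤ q := by linarith
  set γ := ‖(Real.Gamma α)⁻¹‖ₑ
  calc ∫⁻ t in Ioo 0 T, ‖t ^ (-α) * riemannLiouville α f t‖ₑ ^ q * ENNReal.ofReal (t ^ μ)
      ≤ ∫⁻ t in Ioo 0 T, (γ * ∫⁻ σ in Ioo 0 1,
          ENNReal.ofReal ((1 - σ) ^ (α - 1)) * ‖f (t * σ)‖ₑ) ^ q * ENNReal.ofReal (t ^ μ) :=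
        setLIntegral_mono' measurableSet_Ioo fun t ht => by
          gcongr
          exact enorm_rpow_neg_mul_riemannLiouville_le α f ht.1
    _ = γ ^ q * ∫⁻ t in Ioo 0 T, (∫⁻ σ in Ioo 0 1,
          ENNReal.ofReal ((1 - σ) ^ (α - 1)) * ‖f (t * σ)‖ₑ) ^ q * ENNReal.ofReal (t ^ μ) := by
        simp_rw [ENNReal.mul_rpow_of_nonneg _ _ hq0, mul_assoc]
        exact lintegral_const_mul' _ _ (ENNReal.rpow_ne_top_of_nonneg hq0 enorm_ne_top)
    _ ≤ _ := by
        rw [ENNReal.mul_rpow_of_nonneg _ _ hq0, mul_assoc]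
        gcongr
        exact setLIntegral_Ioo_lintegral_dilation_rpow_le (by fun_prop) (by fun_prop) hq μ T

/-- If `u = I^α f` then `‖t^{−α} u‖_{L_q((0,T),t^μ dt)} ≤ N(α,q,μ) ‖f‖_{L_q((0,T),t^μ dt)}`
(in the `q`-th power form). -/
theorem stmt_9 (α q μ : ℝ) (hα : α ∈ Ioo (0:ℝ) 1) (hq : 1 < q)
    (hμ : μ ∈ Ioo (-1:ℝ) (q-1)) :
    ∃ N : ℝ, 0 < N ∧ ∀ T : ℝ, 0 < T → ∀ f : ℝ → ℝ, Measurable f →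
      (∫⁻ t in Ioo (0:ℝ) T, ENNReal.ofReal (|f t| ^ q * t ^ μ)) < ⊤ →
      (∫⁻ t in Ioo (0:ℝ) T,
          ENNReal.ofReal (|t ^ (-α) *
            ((Real.Gamma α)⁻¹ * ∫ s in Ioo (0:ℝ) t, (t - s) ^ (α - 1) * f s)| ^ q * t ^ μ)) ≤
        ENNReal.ofReal N *
          ∫⁻ t in Ioo (0:ℝ) T, ENNReal.ofReal (|f t| ^ q * t ^ μ) := by
  have hq0 : 0 ≤ q := by linarith
  set B := ∫⁻ σ in Ioo 0 1, ENNReal.ofReal ((1 - σ) ^ (α - 1)) * ENNReal.ofReal (σ ^ (-(μ + 1) / q))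
  have hB : B < ∞ := by
    refine lt_of_eq_of_lt (setLIntegral_congr_fun measurableSet_Ioo fun σ hσ => ?_)
      (lintegral_Ioo_rpow_mul_one_sub_rpow_lt_top (a := -(μ + 1) / q) (b := α - 1) ?_ ?_)
    · rw [mul_comm, ← ENNReal.ofReal_mul (Real.rpow_nonneg hσ.1.le _)]
    · rw [neg_div, neg_lt_neg_iff, div_lt_one (by linarith)]
      linarith [hμ.2]
    · linarith [hα.1]
  set K := (‖(Real.Gamma α)⁻¹‖ₑ * B) ^ q
  have hK : K ≠ ∞ := ENNReal.rpow_ne_top_of_nonneg hq0 (ENNReal.mul_ne_top enorm_ne_top hB.ne)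
  refine ⟨K.toReal + 1, by positivity, fun T _ f hf _ => ?_⟩
  simp only [ofReal_abs_rpow_mul_eq_enorm_rpow_mul _ _ hq0]
  calc _ ≤ K * ∫⁻ t in Ioo 0 T, ‖f t‖ₑ ^ q * ENNReal.ofReal (t ^ μ) :=
        setLIntegral_Ioo_enorm_rpow_neg_mul_riemannLiouville_le α μ T hq hf
    _ ≤ _ := by
        gcongr
        exact (ENNReal.le_ofReal_iff_toReal_le hK (by positivity)).2 (by linarith)
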